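/- In the Majority cross-validation model with n, k, m, P, L̂_i as in the context, let L̂_CV := (1/k)·Σ_{i=1}^{k} L̂_i be the k-fold cross-validation estimator. Then the mean-squared error of cross-validation (around the population risk 1/2 of Majority under uniformly random labels) satisfies E[(L̂_CV − 1/2)²] = ((k−1)/k)·( E[L̂₁·L̂₂] − E[L̂₁]·E[L̂₂] ) + 1/(4n). -/

import Mathlib

open Finset

/-- Fold `i` (for `1 ≤ i ≤ k`) consists of the indices `{(i-1)·m, …, i·m - 1}`. -/
def cvFold (n m i : ℕ) : Finset (Fin n) :=
  Finset.univ.filter fun j => (i - 1) * m ≤ (j : ℕ) ∧ (j : ℕ) < i * m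

/-- `X_i(ω)`: number of 1-labels inside cvFold `i`. -/
def Xc (n m i : ℕ) (ω : Fin n → Bool) : ℕ :=
  ((cvFold n m i).filter fun j => ω j = true).card

/-- `Y_{-i}(ω)`: number of 1-labels outside cvFold `i`. -/
def Yc (n m i : ℕ) (ω : Fin n → Bool) : ℕ :=
  ((Finset.univ \ cvFold n m i).filter fun j => ω j = true).card

/-- Hold-out error on cvFold `i` of the Majority algorithm trained on the complement of
cvFold `i`: it predicts the constant label `1` iff `Y_{-i} > (n-m)/2`, so the hold-out
error is `(X_i/m)·1{Y_{-i} ≤ (n-m)/2} + ((m-X_i)/m)·1{Y_{-i} > (n-m)/2}`. -/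
noncomputable def Lhat (n m i : ℕ) (ω : Fin n → Bool) : ℝ :=
  if ((n : ℝ) - m) / 2 < (Yc n m i ω : ℝ) then ((m : ℝ) - Xc n m i ω) / m
  else (Xc n m i ω : ℝ) / m

/-- Expectation with respect to the uniform probability measure on `Fin n → Bool`
(i.e. `n` i.i.d. fair-coin binary labels). -/
noncomputable def expec (n : ℕ) (f : (Fin n → Bool) → ℝ) : ℝ :=
  (∑ ω : Fin n → Bool, f ω) / 2 ^ n

/-!
Two symmetries of the uniform label distribution do all the work. Flipping the labels inside
fold `i` replaces `X_i` by `m - X_i` and leaves `Y_{-i}` unchanged, so it exchanges the two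
branches of `L̂_i`; hence `L̂_i` has the law of `X_i / m`, which gives `E[L̂_i] = 1/2` and
`E[L̂_i²] = 1/4 + 1/(4m)`. Permuting whole folds shows that `E[L̂_i L̂_j]` is the same for all
`i ≠ j`. For an average of `k` variables with a common mean, a common second moment and a common
cross moment, the mean square error is then an exact computation.
-/

open scoped BigOperators

lemma expec_eq_expect {n : ℕ} (f : (Fin n → Bool) → ℝ) : expec n f = 𝔼 ω, f ω := by
  simp [expec, Fintype.expect_eq_sum_div_card]

lemma expect_eq_of_add_comp_perm {Ω : Type*} [Fintype Ω] {f g : Ω → ℝ} (e : Equiv.Perm Ω)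
    (h : ∀ ω, f ω + f (e ω) = g ω + g (e ω)) : 𝔼 ω, f ω = 𝔼 ω, g ω := by
  have hf := Fintype.expect_equiv e (fun ω => f (e ω)) f fun _ => rfl
  have hg := Fintype.expect_equiv e (fun ω => g (e ω)) g fun _ => rfl
  have := Finset.expect_congr rfl fun ω (_ : ω ∈ univ) => h ω
  rw [expect_add_distrib, expect_add_distrib, hf, hg] at this
  linarith

section TrueCount

variable {ι : Type*}

def trueCount (s : Finset ι) (ω : ι → Bool) : ℕ := #{j ∈ s | ω j = true}

def flipOn [DecidableEq ι] (s : Finset ι) : Equiv.Perm (ι → Bool) :=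
  Function.Involutive.toPerm (fun ω j => if j ∈ s then !ω j else ω j) fun ω => by
    funext j; by_cases hj : j ∈ s <;> simp [hj]

lemma flipOn_apply [DecidableEq ι] (s : Finset ι) (ω : ι → Bool) (j : ι) :
    flipOn s ω j = if j ∈ s then !ω j else ω j := rfl

lemma trueCount_le_card (s : Finset ι) (ω : ι → Bool) : trueCount s ω ≤ #s :=
  card_filter_le _ _

lemma trueCount_union [DecidableEq ι] {s t : Finset ι} (hst : Disjoint s t) (ω : ι → Bool) :
    trueCount (s ∪ t) ω = trueCount s ω + trueCount t ω := by
  rw [trueCount, filter_union, card_union_of_disjoint (disjoint_filter_filter hst)]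
  rfl

lemma trueCount_singleton (a : ι) (ω : ι → Bool) :
    trueCount {a} ω = if ω a = true then 1 else 0 := by
  rw [trueCount, filter_singleton]; split_ifs <;> rfl

lemma trueCount_flipOn_self [DecidableEq ι] (s : Finset ι) (ω : ι → Bool) :
    trueCount s (flipOn s ω) = #s - trueCount s ω := by
  rw [trueCount, trueCount, ← card_sdiff_of_subset (filter_subset _ _), ← filter_not]
  congr 1
  exact filter_congr fun j hj => by simp [flipOn_apply, hj]

lemma trueCount_flipOn_of_disjoint [DecidableEq ι] {s t : Finset ι} (hst : Disjoint s t)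
    (ω : ι → Bool) :
    trueCount t (flipOn s ω) = trueCount t ω := by
  unfold trueCount
  congr 1
  exact filter_congr fun j hj => by simp [flipOn_apply, disjoint_right.mp hst hj]

lemma trueCount_comp_perm (s : Finset ι) (σ : Equiv.Perm ι) (ω : ι → Bool) :
    trueCount s (ω ∘ σ) = trueCount (s.map σ.toEmbedding) ω := by
  rw [trueCount, trueCount, filter_map, card_map]
  rfl

end TrueCount

section Moments

variable {ι : Type*} [Fintype ι] [DecidableEq ι]

lemma expect_trueCount (s : Finset ι) : 𝔼 ω : ι → Bool, (trueCount s ω : ℝ) = #s / 2 := by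
  refine (expect_eq_of_add_comp_perm (flipOn s) fun ω => ?_).trans (Fintype.expect_const _)
  rw [trueCount_flipOn_self, Nat.cast_sub (trueCount_le_card s ω)]
  ring

lemma expect_trueCount_mul_of_disjoint {s t : Finset ι} (hst : Disjoint s t) :
    𝔼 ω : ι → Bool, (trueCount s ω * trueCount t ω : ℝ) = #s * #t / 4 := by
  calc 𝔼 ω : ι → Bool, (trueCount s ω * trueCount t ω : ℝ)
      = 𝔼 ω : ι → Bool, (#s / 2 * trueCount t ω : ℝ) := by
        refine expect_eq_of_add_comp_perm (flipOn s) fun ω => ?_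
        rw [trueCount_flipOn_self, trueCount_flipOn_of_disjoint hst,
          Nat.cast_sub (trueCount_le_card s ω)]
        ring
    _ = #s * #t / 4 := by
        rw [← mul_expect, expect_trueCount]
        ring

lemma expect_trueCount_sq (s : Finset ι) :
    𝔼 ω : ι → Bool, (trueCount s ω : ℝ) ^ 2 = #s / 4 + #s ^ 2 / 4 := by
  induction s using Finset.induction_on with
  | empty => simp [trueCount]
  | insert a s ha ih =>
    have hdisj : Disjoint {a} s := disjoint_singleton_left.mpr ha
    have hsq : ∀ ω, (trueCount {a} ω : ℝ) ^ 2 = trueCount {a} ω := fun ω => by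
      rw [trueCount_singleton]; split_ifs <;> norm_num
    calc 𝔼 ω : ι → Bool, (trueCount (insert a s) ω : ℝ) ^ 2
        = 𝔼 ω : ι → Bool, ((trueCount {a} ω : ℝ) + 2 * (trueCount {a} ω * trueCount s ω)
            + (trueCount s ω : ℝ) ^ 2) := by
          refine expect_congr rfl fun ω _ => ?_
          rw [insert_eq, trueCount_union hdisj, Nat.cast_add, add_sq, hsq]
          ring
      _ = #(insert a s) / 4 + #(insert a s) ^ 2 / 4 := by
          rw [expect_add_distrib, expect_add_distrib, ← mul_expect, expect_trueCount,
            expect_trueCount_mul_of_disjoint hdisj, ih, card_insert_of_notMem ha, card_singleton]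
          push_cast
          ring

end Moments

section Folds

variable {n k m : ℕ}

def blockEquiv (h : n = k * m) : Fin n ≃ Fin k × Fin m :=
  (finCongr h).trans finProdFinEquiv.symm

lemma mem_cvFold_iff (h : n = k * m) (x : Fin n) (i : ℕ) :
    x ∈ cvFold n m i ↔ ((blockEquiv h x).1 : ℕ) + 1 = i := by
  have hm : 0 < m := Nat.pos_of_ne_zero fun hm => by simpa [h, hm] using x.isLt
  simp only [cvFold, blockEquiv, mem_filter, mem_univ, true_and, Equiv.trans_apply,
    finProdFinEquiv_symm_apply, Fin.coe_divNat, finCongr_apply, Fin.val_cast]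
  rw [← Nat.le_div_iff_mul_le hm, ← Nat.div_lt_iff_lt_mul hm]
  generalize (x : ℕ) / m = q
  omega

lemma exists_fin_add_one_eq {i : ℕ} (hi : i ∈ Icc 1 k) : ∃ a : Fin k, (a : ℕ) + 1 = i := by
  rw [mem_Icc] at hi
  exact ⟨⟨i - 1, by omega⟩, by simp; omega⟩

lemma card_cvFold (h : n = k * m) {i : ℕ} (hi : i ∈ Icc 1 k) : #(cvFold n m i) = m := by
  obtain ⟨a, rfl⟩ := exists_fin_add_one_eq hi
  have : cvFold n m (a + 1) = ({a} ×ˢ univ).map (blockEquiv h).symm.toEmbedding := by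
    ext x
    simp [mem_cvFold_iff h, mem_map_equiv, Fin.val_inj, Prod.ext_iff, eq_comm]
  rw [this, card_map, card_product, card_singleton, card_univ, Fintype.card_fin, one_mul]

def blockPerm (h : n = k * m) (τ : Equiv.Perm (Fin k)) : Equiv.Perm (Fin n) :=
  (blockEquiv h).trans ((τ.prodCongr (Equiv.refl (Fin m))).trans (blockEquiv h).symm)

lemma map_cvFold_blockPerm (h : n = k * m) (τ : Equiv.Perm (Fin k)) (a : Fin k) :
    (cvFold n m (a + 1)).map (blockPerm h τ).toEmbedding = cvFold n m (τ a + 1) := by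
  ext y
  rw [mem_map_equiv, mem_cvFold_iff h, mem_cvFold_iff h]
  simp [blockPerm, Fin.val_inj, Equiv.symm_apply_eq]

end Folds

lemma Equiv.Perm.exists_apply_eq_and_apply_eq {α : Type*} [DecidableEq α] {a b c d : α}
    (hab : a ≠ b) (hcd : c ≠ d) : ∃ τ : Equiv.Perm α, τ c = a ∧ τ d = b := by
  have had : Equiv.swap c a c ≠ Equiv.swap c a d := (Equiv.swap c a).injective.ne hcd
  rw [Equiv.swap_apply_left] at had
  exact ⟨(Equiv.swap c a).trans (Equiv.swap (Equiv.swap c a d) b),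
    by simp [Equiv.swap_apply_of_ne_of_ne had hab], by simp⟩

section HoldOut

variable {n m : ℕ}

lemma Xc_eq_trueCount (i : ℕ) (ω : Fin n → Bool) : Xc n m i ω = trueCount (cvFold n m i) ω :=
  rfl

lemma Yc_eq_trueCount (i : ℕ) (ω : Fin n → Bool) :
    Yc n m i ω = trueCount (univ \ cvFold n m i) ω :=
  rfl

lemma Lhat_comp_perm {i j : ℕ} (σ : Equiv.Perm (Fin n))
    (hσ : (cvFold n m i).map σ.toEmbedding = cvFold n m j) (ω : Fin n → Bool) :
    Lhat n m i (ω ∘ σ) = Lhat n m j ω := by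
  have hX : Xc n m i (ω ∘ σ) = Xc n m j ω := by
    rw [Xc_eq_trueCount, trueCount_comp_perm, hσ, Xc_eq_trueCount]
  have hY : Yc n m i (ω ∘ σ) = Yc n m j ω := by
    rw [Yc_eq_trueCount, trueCount_comp_perm, Finset.map_sdiff, map_univ_equiv, hσ,
      Yc_eq_trueCount]
  simp only [Lhat, hX, hY]

lemma comp_Lhat_add_comp_Lhat_flipOn {i : ℕ} (hcard : #(cvFold n m i) = m) (g : ℝ → ℝ)
    (ω : Fin n → Bool) :
    g (Lhat n m i ω) + g (Lhat n m i (flipOn (cvFold n m i) ω))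
      = g (Xc n m i ω / m) + g (Xc n m i (flipOn (cvFold n m i) ω) / m) := by
  have hX : (Xc n m i (flipOn (cvFold n m i) ω) : ℝ) = m - Xc n m i ω := by
    rw [Xc_eq_trueCount, trueCount_flipOn_self, Nat.cast_sub (trueCount_le_card _ ω), hcard,
      Xc_eq_trueCount]
  have hY : Yc n m i (flipOn (cvFold n m i) ω) = Yc n m i ω :=
    trueCount_flipOn_of_disjoint disjoint_sdiff ω
  simp only [Lhat, hX, hY]
  split_ifs
  · rw [sub_sub_cancel, add_comm]
  · rfl

lemma expect_comp_Lhat {i : ℕ} (hcard : #(cvFold n m i) = m) (g : ℝ → ℝ) :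
    𝔼 ω, g (Lhat n m i ω) = 𝔼 ω, g (Xc n m i ω / m) :=
  expect_eq_of_add_comp_perm (flipOn _) (comp_Lhat_add_comp_Lhat_flipOn hcard g)

lemma expect_Lhat {i : ℕ} (hcard : #(cvFold n m i) = m) (hm : m ≠ 0) :
    𝔼 ω, Lhat n m i ω = 1 / 2 := by
  rw [expect_comp_Lhat hcard fun x => x, ← expect_div]
  simp only [Xc_eq_trueCount]
  rw [expect_trueCount, hcard]
  field_simp

lemma expect_Lhat_sq {i : ℕ} (hcard : #(cvFold n m i) = m) (hm : m ≠ 0) :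
    𝔼 ω, Lhat n m i ω ^ 2 = 1 / 4 + 1 / (4 * m) := by
  rw [expect_comp_Lhat hcard fun x => x ^ 2]
  simp only [div_pow, ← expect_div, Xc_eq_trueCount]
  rw [expect_trueCount_sq, hcard]
  field_simp
  ring

lemma expect_Lhat_mul_Lhat_eq {k : ℕ} (h : n = k * m) {i j i' j' : ℕ}
    (hi : i ∈ Icc 1 k) (hj : j ∈ Icc 1 k) (hij : i ≠ j)
    (hi' : i' ∈ Icc 1 k) (hj' : j' ∈ Icc 1 k) (hij' : i' ≠ j') :
    𝔼 ω, Lhat n m i ω * Lhat n m j ω = 𝔼 ω, Lhat n m i' ω * Lhat n m j' ω := by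
  obtain ⟨a, rfl⟩ := exists_fin_add_one_eq hi
  obtain ⟨b, rfl⟩ := exists_fin_add_one_eq hj
  obtain ⟨a', rfl⟩ := exists_fin_add_one_eq hi'
  obtain ⟨b', rfl⟩ := exists_fin_add_one_eq hj'
  obtain ⟨τ, rfl, rfl⟩ := Equiv.Perm.exists_apply_eq_and_apply_eq
    (show a ≠ b from fun hab => hij (by rw [hab]))
    (show a' ≠ b' from fun hab => hij' (by rw [hab]))
  refine Fintype.expect_equiv ((blockPerm h τ).symm.arrowCongr (Equiv.refl Bool)) _ _
    fun ω => ?_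
  change _ = Lhat n m (a' + 1) (ω ∘ blockPerm h τ) * Lhat n m (b' + 1) (ω ∘ blockPerm h τ)
  rw [Lhat_comp_perm _ (map_cvFold_blockPerm h τ a'),
    Lhat_comp_perm _ (map_cvFold_blockPerm h τ b')]

end HoldOut

lemma sum_ite_eq_of_mem {ι R : Type*} [DecidableEq ι] [Ring R] {s : Finset ι} {i : ι}
    (hi : i ∈ s) (v c : R) :
    ∑ j ∈ s, (if i = j then v else c) = v + (#s - 1) * c := by
  rw [sum_ite, filter_eq, if_pos hi, filter_ne, sum_const, sum_const, card_singleton,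
    card_erase_of_mem hi, one_smul, nsmul_eq_mul, Nat.cast_pred (card_pos.mpr ⟨i, hi⟩)]

lemma expect_sq_mean_sub {Ω ι : Type*} [Fintype Ω] [Nonempty Ω] [DecidableEq ι] {s : Finset ι}
    (hs : s.Nonempty) (L : ι → Ω → ℝ) {μ v c : ℝ} (hmean : ∀ i ∈ s, 𝔼 ω, L i ω = μ)
    (hmoment : ∀ i ∈ s, ∀ j ∈ s, 𝔼 ω, L i ω * L j ω = if i = j then v else c) :
    𝔼 ω, (1 / (#s : ℝ) * ∑ i ∈ s, L i ω - μ) ^ 2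
      = ((#s : ℝ) - 1) / #s * (c - μ ^ 2) + (v - μ ^ 2) / #s := by
  have hK : (#s : ℝ) ≠ 0 := Nat.cast_ne_zero.mpr hs.card_pos.ne'
  have hrow : ∀ i ∈ s, ∑ j ∈ s, 𝔼 ω, L i ω * L j ω = v + (#s - 1) * c := fun i hi => by
    rw [sum_congr rfl (hmoment i hi), sum_ite_eq_of_mem hi]
  calc 𝔼 ω, (1 / (#s : ℝ) * ∑ i ∈ s, L i ω - μ) ^ 2
      = 𝔼 ω, (1 / (#s : ℝ) ^ 2 * ∑ i ∈ s, ∑ j ∈ s, L i ω * L j ω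
          - 2 * μ / #s * ∑ i ∈ s, L i ω + μ ^ 2) :=
        expect_congr rfl fun ω _ => by rw [← sum_mul_sum]; ring
    _ = 1 / (#s : ℝ) ^ 2 * ∑ i ∈ s, ∑ j ∈ s, 𝔼 ω, L i ω * L j ω
          - 2 * μ / #s * ∑ i ∈ s, 𝔼 ω, L i ω + μ ^ 2 := by
        simp only [expect_add_distrib, expect_sub_distrib, ← mul_expect, expect_sum_comm,
          Fintype.expect_const]
    _ = ((#s : ℝ) - 1) / #s * (c - μ ^ 2) + (v - μ ^ 2) / #s := by
        rw [sum_congr rfl hrow, sum_congr rfl hmean, sum_const, sum_const, nsmul_eq_mul,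
          nsmul_eq_mul]
        field_simp
        ring

/-- **MSE decomposition for Majority.**
With `L̂_CV = (1/k)·Σ_{i=1}^k L̂_i` the k-fold cross-validation estimator, the
mean-squared error around the population risk `1/2` of Majority under uniformly
random labels satisfies
`E[(L̂_CV - 1/2)²] = ((k-1)/k)·(E[L̂₁L̂₂] - E[L̂₁]E[L̂₂]) + 1/(4n)`. -/
theorem majority_mse_decomposition
    (n k : ℕ) (hn : 2 ≤ n) (hk : 2 ≤ k) (hkn : k ∣ n) (m : ℕ) (hm : m = n / k) :
    expec n (fun ω => ((1 / (k : ℝ)) * ∑ i ∈ Finset.Icc 1 k, Lhat n m i ω - 1 / 2) ^ 2)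
      = (((k : ℝ) - 1) / k) *
          (expec n (fun ω => Lhat n m 1 ω * Lhat n m 2 ω)
            - expec n (Lhat n m 1) * expec n (Lhat n m 2))
        + 1 / (4 * n) := by
  have hnkm : n = k * m := by rw [hm, Nat.mul_div_cancel' hkn]
  have hm0 : m ≠ 0 := by rintro rfl; omega
  have hcard : ∀ i ∈ Icc 1 k, #(cvFold n m i) = m := fun i hi => card_cvFold hnkm hi
  have h1 : 1 ∈ Icc 1 k := mem_Icc.mpr ⟨le_rfl, by omega⟩
  have h2 : 2 ∈ Icc 1 k := mem_Icc.mpr ⟨by norm_num, hk⟩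
  have hmoment : ∀ i ∈ Icc 1 k, ∀ j ∈ Icc 1 k, 𝔼 ω, Lhat n m i ω * Lhat n m j ω
      = if i = j then 1 / 4 + 1 / (4 * (m : ℝ)) else 𝔼 ω, Lhat n m 1 ω * Lhat n m 2 ω := by
    intro i hi j hj
    split_ifs with hij
    · rw [← hij, ← expect_Lhat_sq (hcard i hi) hm0]
      simp only [sq]
    · exact expect_Lhat_mul_Lhat_eq hnkm hi hj hij h1 h2 (by norm_num)
  have hmse := expect_sq_mean_sub ⟨1, h1⟩ (Lhat n m)
    (fun i hi => expect_Lhat (hcard i hi) hm0) hmoment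
  rw [Nat.card_Icc, Nat.add_sub_cancel] at hmse
  simp only [expec_eq_expect]
  rw [hmse, expect_Lhat (hcard 1 h1) hm0, expect_Lhat (hcard 2 h2) hm0, hnkm]
  push_cast
  field_simp
  ring
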